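/- In the algebra M = ⊕⁴ᵢ₌₁Mₙ(ℂ) with subalgebra N = {diag(A,A,A,A)} and conditional expectation E(A₁⊕A₂⊕A₃⊕A₄) = B⊕⁴ with B = (ΣAᵢ)/4: take φ to be the state with density matrix (1/4)(ρ₀⊕ρ₀⊕ρ₀⊕ρ₀) for any faithful density matrix ρ₀ on ℂⁿ, and φᵢ (i=1..4) the states with density matrices ρ₀ supported entirely in the i-th block. Then φ = (1/4)Σᵢφᵢ, φ∘E = φ, all restrictions φᵢ|N coincide, and the entropic disturbance χ({1/4},{φᵢ}) − χ({1/4},{φᵢ|N}) equals 2 log 2. -/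

import Mathlib

open Matrix
open scoped ComplexOrder

/-- Matrix logarithm via the Hermitian functional calculus, with the convention
`Real.log 0 = 0` on the kernel (junk value `0` for non-Hermitian input). -/
noncomputable def mlog {n : ℕ} (A : Matrix (Fin n) (Fin n) ℂ) : Matrix (Fin n) (Fin n) ℂ :=
  if h : A.IsHermitian then h.cfc Real.log else 0

/-- Umegaki relative entropy `S(ρ,σ) = Tr(ρ (log ρ - log σ))` (real part of the trace). -/
noncomputable def relEnt {n : ℕ} (ρ σ : Matrix (Fin n) (Fin n) ℂ) : ℝ :=
  ((ρ * (mlog ρ - mlog σ)).trace).re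

/-- The support condition `supp ρ ≤ supp σ`, phrased as kernel containment
(`ker σ ⊆ ker ρ`), which is equivalent for positive semidefinite matrices. -/
def suppLE {n : ℕ} (ρ σ : Matrix (Fin n) (Fin n) ℂ) : Prop :=
  ∀ v : Fin n → ℂ, σ.mulVec v = 0 → ρ.mulVec v = 0
/-- The averaging conditional expectation E(A₁⊕A₂⊕A₃⊕A₄) = B⊕B⊕B⊕B, B = (ΣAᵢ)/4, on
M = ⊕⁴Mₙ(ℂ), modelled as the Pi-algebra Fin 4 → Mₙ(ℂ). -/
noncomputable def Eavg {n : ℕ} (X : Fin 4 → Matrix (Fin n) (Fin n) ℂ) :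
    Fin 4 → Matrix (Fin n) (Fin n) ℂ :=
  fun _ => (4 : ℂ)⁻¹ • ∑ i, X i

/-- Umegaki relative entropy on the block-diagonal algebra ⊕⁴Mₙ(ℂ): the sum of the
blockwise contributions Tr(ρᵢ(log ρᵢ − log σᵢ)). -/
noncomputable def piRelEnt {n : ℕ} (ρ σ : Fin 4 → Matrix (Fin n) (Fin n) ℂ) : ℝ :=
  ∑ i, relEnt (ρ i) (σ i)

/-- The density matrix (w.r.t. the trace of Mₙ(ℂ)) of the restriction to the diagonal
subalgebra N = {A⊕A⊕A⊕A} ≅ Mₙ(ℂ) of the state with block densities ρᵢ: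
Σᵢ Tr(ρᵢA) = Tr((Σᵢρᵢ)A). -/
noncomputable def resD {n : ℕ} (ρ : Fin 4 → Matrix (Fin n) (Fin n) ℂ) :
    Matrix (Fin n) (Fin n) ℂ :=
  ∑ i, ρ i

/-!
Each φᵢ is ρ₀ in one block and `0` elsewhere, while φ is `ρ₀/4` in every block, so
`S(φᵢ, φ) = S(ρ₀, ρ₀/4) = log 4` (the logarithm of `cρ` is `log ρ + log c` on the support of ρ).
On `N` every φᵢ, and φ itself, restricts to the density ρ₀, so the second Holevo quantity
vanishes and the disturbance is `log 4 = 2 log 2`.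
-/

lemma mlog_eq_cfc {n : ℕ} {A : Matrix (Fin n) (Fin n) ℂ} (hA : A.IsHermitian) :
    mlog A = cfc Real.log A := by
  rw [mlog, dif_pos hA, hA.cfc_eq]

/-- The junk value `Real.log 0 = 0` breaks `log (c x) = log c + log x` on the kernel of `ρ`,
but the factor `ρ` in front of the logarithms kills the kernel. -/
lemma relEnt_smul_self {n : ℕ} {ρ : Matrix (Fin n) (Fin n) ℂ} (hρ : ρ.IsHermitian) {c : ℝ}
    (hc : c ≠ 0) : relEnt ρ ((c : ℂ) • ρ) = -Real.log c * ρ.trace.re := by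
  have hsa : IsSelfAdjoint ρ := hρ
  have hfin := ρ.finite_real_spectrum
  have hlog : mlog ((c : ℂ) • ρ) = cfc (fun x => Real.log (c * x)) ρ := by
    rw [Complex.coe_smul, mlog_eq_cfc (IsSelfAdjoint.smul (star_trivial c) hsa),
      ← cfc_comp_smul c Real.log ρ ((hfin.image _).continuousOn _) hsa]
    rfl
  have hprod : ρ * (mlog ρ - mlog ((c : ℂ) • ρ)) = (-Real.log c) • ρ := by
    rw [mlog_eq_cfc hρ, hlog, ← cfc_sub _ _ ρ (hfin.continuousOn _) (hfin.continuousOn _)]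
    nth_rw 1 [← cfc_id ℝ ρ hsa]
    rw [← cfc_mul _ _ ρ (hfin.continuousOn _) (hfin.continuousOn _), ← cfc_const_mul_id _ ρ hsa]
    refine cfc_congr fun x _ => ?_
    rcases eq_or_ne x 0 with rfl | hx
    · simp
    · simp only [id, Real.log_mul hc hx]; ring
  rw [relEnt, hprod, ← Complex.coe_smul, trace_smul, smul_eq_mul, Complex.re_ofReal_mul]

lemma relEnt_zero_left {n : ℕ} (σ : Matrix (Fin n) (Fin n) ℂ) : relEnt 0 σ = 0 := by
  simp [relEnt]

lemma relEnt_self {n : ℕ} (ρ : Matrix (Fin n) (Fin n) ℂ) : relEnt ρ ρ = 0 := by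
  simp [relEnt]

section Blocks

variable {n : ℕ}

lemma resD_ite_eq (ρ : Matrix (Fin n) (Fin n) ℂ) (i : Fin 4) :
    resD (fun j => if j = i then ρ else 0) = ρ := by
  simp [resD]

lemma resD_const (ρ : Matrix (Fin n) (Fin n) ℂ) : resD (fun _ => (4 : ℂ)⁻¹ • ρ) = ρ := by
  rw [resD, Finset.sum_const, Finset.card_univ, Fintype.card_fin]
  module

lemma sum_ite_eq_const (ρ : Matrix (Fin n) (Fin n) ℂ) :
    ∑ i : Fin 4, (fun j => if j = i then ρ else 0) = fun _ => ρ := by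
  ext j : 1
  simp

lemma piRelEnt_ite_eq (ρ : Matrix (Fin n) (Fin n) ℂ) (σ : Fin 4 → Matrix (Fin n) (Fin n) ℂ)
    (i : Fin 4) : piRelEnt (fun j => if j = i then ρ else 0) σ = relEnt ρ (σ i) := by
  rw [piRelEnt, Fintype.sum_eq_single i fun j hj => by rw [if_neg hj, relEnt_zero_left], if_pos rfl]

lemma sum_trace_mul_Eavg_of_const (σ : Matrix (Fin n) (Fin n) ℂ)
    (X : Fin 4 → Matrix (Fin n) (Fin n) ℂ) :
    ∑ j, (σ * Eavg X j).trace = ∑ j, (σ * X j).trace := by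
  simp only [Eavg, Matrix.mul_smul, Matrix.mul_sum, trace_smul, trace_sum, Finset.sum_const,
    Finset.card_univ, Fintype.card_fin, smul_eq_mul]
  ring

end Blocks

/-- with φ the state of density (1/4)(ρ₀⊕ρ₀⊕ρ₀⊕ρ₀) for a faithful density
matrix ρ₀, and φᵢ the state with density ρ₀ in the i-th block: φ = (1/4)Σᵢφᵢ, φ∘E = φ,
all restrictions φᵢ|N coincide, and the entropic disturbance
χ({1/4},{φᵢ}) − χ({1/4},{φᵢ|N}) equals 2 log 2. -/
theorem stmt15 {n : ℕ}
    (ρ₀ : Matrix (Fin n) (Fin n) ℂ) (hρ₀ : ρ₀.PosDef) (htr : ρ₀.trace = 1)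
    (φ : Fin 4 → Matrix (Fin n) (Fin n) ℂ) (hφ : φ = fun _ => (4 : ℂ)⁻¹ • ρ₀)
    (φs : Fin 4 → (Fin 4 → Matrix (Fin n) (Fin n) ℂ))
    (hφs : ∀ i, φs i = fun j => if j = i then ρ₀ else 0) :
    -- φ = (1/4) Σᵢ φᵢ
    (φ = (4 : ℂ)⁻¹ • ∑ i, φs i) ∧
    -- invariance φ∘E = φ
    (∀ X : Fin 4 → Matrix (Fin n) (Fin n) ℂ,
      ∑ j, (φ j * Eavg X j).trace = ∑ j, (φ j * X j).trace) ∧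
    -- the restrictions φᵢ|N all coincide
    (∀ i i', resD (φs i) = resD (φs i')) ∧
    -- the entropic disturbance equals 2 log 2
    ((∑ i, (1 / 4 : ℝ) * piRelEnt (φs i) φ)
      - (∑ i, (1 / 4 : ℝ) * relEnt (resD (φs i)) (resD φ)) = 2 * Real.log 2) := by
  obtain rfl : φs = fun i j => if j = i then ρ₀ else 0 := funext hφs
  subst hφ
  have hquarter : relEnt ρ₀ ((4 : ℂ)⁻¹ • ρ₀) = 2 * Real.log 2 := by
    have h := relEnt_smul_self hρ₀.isHermitian (c := 4⁻¹) (by norm_num)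
    push_cast at h
    rw [h, htr, Real.log_inv, show (4 : ℝ) = 2 ^ 2 by norm_num, Real.log_pow]
    simp
  refine ⟨?_, fun X => sum_trace_mul_Eavg_of_const _ X, fun i i' => ?_, ?_⟩
  · rw [sum_ite_eq_const]; rfl
  · rw [resD_ite_eq, resD_ite_eq]
  · simp only [piRelEnt_ite_eq, hquarter, resD_ite_eq, resD_const, relEnt_self, mul_zero,
      Finset.sum_const, Finset.card_univ, Fintype.card_fin, nsmul_eq_mul, sub_zero]
    ring
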